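/- arXiv:2002.08968 — 2 statements merged into one kernel-verified Lean document; each statement's English description precedes it below -/
import Mathlib

section
/- The internal energy function U, defined by fixing a reference state σ₀ and reference energy U⁰ and setting U(σ) := U⁰ + W(p) for any work process p from σ₀ to σ, or U(σ) := U⁰ − W(p') for any work process p' from σ to σ₀, is a well-defined function on the state space: it is independent of the choice of process, and the two formulas agree whenever processes in both directions exist. -/
/-- The internal energy is a well-defined function on the state
space: there is a function `U` with `U σ = U0 + W p` for any work process `p`
from the reference state `σ₀` to `σ`, and `U σ = U0 - W p'` for any work
process `p'` from `σ` to `σ₀` (independent of the choice of process, and the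
two formulas agree whenever processes in both directions exist). -/
theorem internal_energy_well_defined {St P : Type*} (inp od : P → St) (W : P → ℝ)
    (hconc : ∀ p p' : P, od p = inp p' →
      ∃ q : P, inp q = inp p ∧ od q = od p' ∧ W q = W p + W p')
    (hfirst₁ : ∀ σ₁ σ₂ : St,
      (∃ p : P, inp p = σ₁ ∧ od p = σ₂) ∨ (∃ p : P, inp p = σ₂ ∧ od p = σ₁))
    (hfirst₂ : ∀ p p' : P, inp p = inp p' → od p = od p' → W p = W p')
    (σ₀ : St) (U0 : ℝ) :
    ∃ U : St → ℝ,
      (∀ σ : St, ∀ p : P, inp p = σ₀ → od p = σ → U σ = U0 + W p) ∧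
      (∀ σ : St, ∀ p' : P, inp p' = σ → od p' = σ₀ → U σ = U0 - W p') := by
  classical
  -- every loop based anywhere has zero work
  have hloop : ∀ r : P, inp r = od r → W r = 0 := by
    intro r hr
    obtain ⟨q, hq1, hq2, hq3⟩ := hconc r r hr.symm
    have := hfirst₂ q r hq1 hq2
    linarith [this, hq3]
  -- if p : σ₀ → σ and p' : σ → σ₀ then W p' = - W p
  have hrev : ∀ p p' : P, inp p = σ₀ → od p' = σ₀ → od p = inp p' →
      W p' = - W p := by
    intro p p' hp hp' hmid
    obtain ⟨q, hq1, hq2, hq3⟩ := hconc p p' hmid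
    have := hloop q (by rw [hq1, hq2, hp, hp'])
    linarith
  refine ⟨fun σ => if h : ∃ p : P, inp p = σ₀ ∧ od p = σ
      then U0 + W h.choose
      else U0 - W (show ∃ p : P, inp p = σ ∧ od p = σ₀ by
        rcases hfirst₁ σ₀ σ with h' | h'
        · exact absurd h' h
        · exact h').choose, ?_, ?_⟩
  · intro σ p hp1 hp2
    have h : ∃ p : P, inp p = σ₀ ∧ od p = σ := ⟨p, hp1, hp2⟩
    simp only [dif_pos h]
    have := hfirst₂ h.choose p (h.choose_spec.1.trans hp1.symm)
      (h.choose_spec.2.trans hp2.symm)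
    linarith
  · intro σ p' hp1 hp2
    by_cases h : ∃ p : P, inp p = σ₀ ∧ od p = σ
    · simp only [dif_pos h]
      have := hrev h.choose p' h.choose_spec.1 hp2 (h.choose_spec.2.trans hp1.symm)
      linarith
    · simp only [dif_neg h]
      set h' := show ∃ p : P, inp p = σ ∧ od p = σ₀ by
        rcases hfirst₁ σ₀ σ with h'' | h''
        · exact absurd h'' h
        · exact h''
      have := hfirst₂ h'.choose p' (h'.choose_spec.1.trans hp1.symm)
        (h'.choose_spec.2.trans hp2.symm)
      linarith
end

section
/- Entropy Theorem: if S is a thermodynamic system whose entropy S_S is defined via Clausius' theorem (S_S(σ) − S_S(σ₀) = Σᵢ Q_i/T_i over any admissible reversible sequence from σ₀ to σ, well-defined independently of the sequence), then for any work process p on S, S_S(⌊p⌋) ≤ S_S(⌈p⌉), with equality when p is reversible. Consequently entropy is a monotone for the preorder σ → σ' given by existence of a work process. -/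
/-- Entropy Theorem: if entropy `Sf` is defined via Clausius'
theorem (entropy differences are the Clausius sums `∑ Qᵢ/Tᵢ` of admissible
reversible sequences, independent of the sequence), then for any work process
`p` on `S`, `Sf ⌊p⌋ ≤ Sf ⌈p⌉`, with equality when `p` is reversible;
consequently entropy is a monotone for the preorder given by the existence of
a work process. -/
theorem entropy_theorem {St Seq WP : Type*}
    (start finish : Seq → St) (cSum : Seq → ℝ) (Sf : St → ℝ)
    -- (1) entropy differences are computed by any admissible reversible sequence
    (hS : ∀ s : Seq, Sf (finish s) - Sf (start s) = cSum s)
    (hexists : ∀ σ σ' : St, ∃ s : Seq, start s = σ ∧ finish s = σ')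
    (inp od : WP → St) (Rev : WP → Prop)
    -- (2)+(3) Clausius' theorem applied to the cycle consisting of the work
    -- process `p` (zero heat) followed by an admissible sequence back
    (hclausius : ∀ (p : WP) (s : Seq),
      start s = od p → finish s = inp p → cSum s ≤ 0)
    (hclausiusRev : ∀ (p : WP), Rev p → ∀ s : Seq,
      start s = od p → finish s = inp p → cSum s = 0) :
    (∀ p : WP, Sf (inp p) ≤ Sf (od p)) ∧
    (∀ p : WP, Rev p → Sf (inp p) = Sf (od p)) ∧
    (∀ σ σ' : St, (∃ p : WP, inp p = σ ∧ od p = σ') → Sf σ ≤ Sf σ') := by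
  have key : ∀ p : WP, Sf (inp p) ≤ Sf (od p) := by
    intro p
    obtain ⟨s, h1, h2⟩ := hexists (od p) (inp p)
    have := hS s
    have hle := hclausius p s h1 h2
    rw [h1, h2] at this
    linarith
  refine ⟨key, ?_, ?_⟩
  · intro p hp
    obtain ⟨s, h1, h2⟩ := hexists (od p) (inp p)
    have := hS s
    have heq := hclausiusRev p hp s h1 h2
    rw [h1, h2] at this
    linarith
  · rintro σ σ' ⟨p, rfl, rfl⟩
    exact key p
end
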